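/- arXiv:1705.05357 — 9 statements merged into one kernel-verified Lean document; each statement's English description precedes it below -/
import Mathlib

section
/- Let k, l ∈ ℕ with k ≥ l ≥ 1 and let A ∈ Mat_{k×l}(ℤ). The following are equivalent: (1) there exists a matrix C ∈ Mat_{k×(k−l)}(ℤ) such that the k×k block matrix (A|C) is invertible over ℤ (i.e. has determinant ±1); (2) the greatest common divisor of all l×l minors of A is equal to 1. -/
/-!
Both conditions are equivalent to `A` having a left inverse `B` over `ℤ`.
By Cauchy–Binet, `1 = det (B * A)` lies in the ideal generated by the maximal minors of `A`;
conversely, if `∑ c_r det A_r = 1` then `∑ c_r adj(A_r) E_r` is a left inverse, where `E_r`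
selects the rows `r`. An invertible `(A|C)` yields `B` as the first `l` rows of its inverse.
If `B * A = 1`, then `ℤ^k = im A + ker B`, and `ker B`, free of rank `k - l` over the PID `ℤ`,
supplies the columns of `C`.
-/

/-- The `k × k` block matrix `(A|C)` obtained by placing the columns of `C` to the
right of the columns of `A`. -/
def appendCols (k l : ℕ) (A : Matrix (Fin k) (Fin l) ℤ)
    (C : Matrix (Fin k) (Fin (k - l)) ℤ) : Matrix (Fin k) (Fin k) ℤ :=
  Matrix.of fun i j =>
    if h : (j : ℕ) < l then A i ⟨j, h⟩
    else C i ⟨(j : ℕ) - l, by have := j.isLt; omega⟩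

open Matrix

theorem Ideal.span_range_eq_span_singleton_gcd {R ι : Type*} [CommRing R] [IsPrincipalIdealRing R]
    [NormalizedGCDMonoid R] [Fintype ι] (f : ι → R) :
    Ideal.span (Set.range f) = Ideal.span {Finset.univ.gcd f} := by
  obtain ⟨d, hd⟩ := (IsPrincipalIdealRing.principal (Ideal.span (Set.range f))).principal
  refine le_antisymm (Ideal.span_le.mpr ?_) ?_
  · rintro _ ⟨i, rfl⟩
    exact Ideal.mem_span_singleton.mpr (Finset.gcd_dvd (Finset.mem_univ i))
  · rw [hd, Ideal.span_singleton_le_span_singleton]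
    refine Finset.dvd_gcd fun i _ => Ideal.mem_span_singleton.mp ?_
    rw [← Ideal.submodule_span_eq, ← hd]
    exact Ideal.subset_span ⟨i, rfl⟩

theorem Ideal.span_range_eq_top_iff_gcd_eq_one {R ι : Type*} [CommRing R] [IsPrincipalIdealRing R]
    [NormalizedGCDMonoid R] [Fintype ι] (f : ι → R) :
    Ideal.span (Set.range f) = ⊤ ↔ Finset.univ.gcd f = 1 := by
  rw [span_range_eq_span_singleton_gcd, span_singleton_eq_top, ← normalize_eq_one,
    Finset.normalize_gcd]

namespace Matrix

variable {R : Type*} [CommRing R] {m n : Type*} [Fintype n] [DecidableEq n]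

theorem det_mul_eq_sum_prod_mul_det_submatrix [Fintype m] (B : Matrix n m R) (A : Matrix m n R) :
    (B * A).det = ∑ r : n → m, (∏ i, B i (r i)) * (A.submatrix r id).det := by
  have hrows : B * A = fun i => ∑ t, B i t • A t := by
    ext i j; simp [mul_apply, Finset.sum_apply]
  calc (B * A).det = detRowAlternating.toMultilinearMap (fun i => ∑ t, B i t • A t) := by
        rw [hrows]; rfl
    _ = ∑ r : n → m, detRowAlternating.toMultilinearMap (fun i => B i (r i) • A (r i)) :=
        MultilinearMap.map_sum _ _
    _ = _ := by
        refine Finset.sum_congr rfl fun r _ => ?_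
        rw [MultilinearMap.map_smul_univ, smul_eq_mul]
        rfl

theorem det_submatrix_mem_span_range_det_submatrix (A : Matrix m n R) (r : n → m) :
    (A.submatrix r id).det ∈
      Ideal.span (Set.range fun r : n ↪ m => (A.submatrix r id).det) := by
  by_cases hr : Function.Injective r
  · exact Ideal.subset_span ⟨⟨r, hr⟩, rfl⟩
  · obtain ⟨i, j, hij, hne⟩ : ∃ i j, r i = r j ∧ i ≠ j := by
      simpa [Function.Injective] using hr
    rw [det_zero_of_row_eq hne (funext fun t => by simp [hij])]
    exact zero_mem _

theorem exists_mul_eq_one_iff_span_det_submatrix_eq_top [Fintype m] [DecidableEq m]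
    (A : Matrix m n R) :
    (∃ B : Matrix n m R, B * A = 1) ↔
      Ideal.span (Set.range fun r : n ↪ m => (A.submatrix r id).det) = ⊤ := by
  rw [Ideal.eq_top_iff_one]
  constructor
  · rintro ⟨B, hBA⟩
    rw [← det_one (R := R) (n := n), ← hBA, det_mul_eq_sum_prod_mul_det_submatrix]
    exact Ideal.sum_mem _ fun r _ =>
      Ideal.mul_mem_left _ _ (det_submatrix_mem_span_range_det_submatrix A r)
  · intro h
    obtain ⟨c, hc⟩ := Ideal.mem_span_range_iff_exists_fun.mp h
    refine
      ⟨∑ r, c r • (adjugate (A.submatrix r id) * (1 : Matrix m m R).submatrix r id), ?_⟩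
    have hselect : ∀ r : n ↪ m, (1 : Matrix m m R).submatrix r id * A = A.submatrix r id := by
      intro r; ext i j; simp [mul_apply, one_apply]
    rw [Matrix.sum_mul]
    simp only [Matrix.smul_mul, Matrix.mul_assoc, hselect, adjugate_mul, smul_smul]
    rw [← Finset.sum_smul, hc, one_smul]

variable [Fintype m] [IsDomain R]

theorem finrank_ker_mulVecLin_add_card_of_mul_eq_one {A : Matrix m n R} {B : Matrix n m R}
    (hBA : B * A = 1) :
    Module.finrank R (LinearMap.ker B.mulVecLin) + Fintype.card n = Fintype.card m := by
  have hsurj : Function.Surjective B.mulVecLin := fun v =>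
    ⟨A *ᵥ v, by simp [mulVec_mulVec, hBA]⟩
  have h := (LinearMap.ker B.mulVecLin).finrank_quotient_add_finrank
  rw [(B.mulVecLin.quotKerEquivOfSurjective hsurj).finrank_eq] at h
  simpa [add_comm] using h

theorem exists_range_mulVecLin_sup_eq_top_of_mul_eq_one [IsPrincipalIdealRing R] {ι : Type*}
    [Fintype ι] {A : Matrix m n R} {B : Matrix n m R} (hBA : B * A = 1)
    (hι : Fintype.card ι + Fintype.card n = Fintype.card m) :
    ∃ C : Matrix m ι R, LinearMap.range A.mulVecLin ⊔ LinearMap.range C.mulVecLin = ⊤ := by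
  set K := LinearMap.ker B.mulVecLin
  have hK : Module.finrank R K = Fintype.card ι := by
    have := finrank_ker_mulVecLin_add_card_of_mul_eq_one hBA
    simp only [K]; omega
  let b : Module.Basis ι R K :=
    (Module.finBasisOfFinrankEq R K hK).reindex (Fintype.equivFin ι).symm
  refine ⟨of fun i j => (b j : m → R) i, eq_top_iff.mpr fun v _ => ?_⟩
  have hC : LinearMap.range (of fun i j => (b j : m → R) i).mulVecLin = K := by
    rw [range_mulVecLin]
    change Submodule.span R (Set.range (K.subtype ∘ b)) = K
    rw [Set.range_comp, Submodule.span_image, b.span_eq, Submodule.map_top,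
      Submodule.range_subtype]
  rw [hC, ← add_sub_cancel (A *ᵥ (B *ᵥ v)) v]
  refine Submodule.add_mem_sup ⟨B *ᵥ v, rfl⟩ ?_
  simp [K, mulVec_sub, mulVec_mulVec, ← Matrix.mul_assoc, hBA]

end Matrix

section appendCols

variable {k l : ℕ} (A : Matrix (Fin k) (Fin l) ℤ) (C : Matrix (Fin k) (Fin (k - l)) ℤ)

theorem appendCols_apply_castLE (hkl : l ≤ k) (i : Fin k) (j : Fin l) :
    appendCols k l A C i (Fin.castLE hkl j) = A i j := by
  simp [appendCols]

theorem appendCols_apply_add (i : Fin k) (j : Fin (k - l)) :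
    appendCols k l A C i ⟨l + j, by omega⟩ = C i j := by
  simp [appendCols]

theorem range_mulVecLin_le_appendCols_left (hkl : l ≤ k) :
    LinearMap.range A.mulVecLin ≤ LinearMap.range (appendCols k l A C).mulVecLin := by
  simp only [range_mulVecLin]
  exact Submodule.span_mono <| Set.range_subset_iff.mpr fun j =>
    ⟨Fin.castLE hkl j, funext fun i => appendCols_apply_castLE A C hkl i j⟩

theorem range_mulVecLin_le_appendCols_right :
    LinearMap.range C.mulVecLin ≤ LinearMap.range (appendCols k l A C).mulVecLin := by
  simp only [range_mulVecLin]
  exact Submodule.span_mono <| Set.range_subset_iff.mpr fun j =>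
    ⟨⟨l + j, by omega⟩, funext fun i => appendCols_apply_add A C i j⟩

theorem isUnit_det_appendCols_of_sup_eq_top (hkl : l ≤ k)
    (h : LinearMap.range A.mulVecLin ⊔ LinearMap.range C.mulVecLin = ⊤) :
    IsUnit (appendCols k l A C).det := by
  rw [← isUnit_iff_isUnit_det, ← mulVec_surjective_iff_isUnit]
  refine (LinearMap.range_eq_top (f := (appendCols k l A C).mulVecLin)).mp (eq_top_iff.mpr ?_)
  exact h ▸ sup_le (range_mulVecLin_le_appendCols_left A C hkl)
    (range_mulVecLin_le_appendCols_right A C)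

theorem exists_mul_eq_one_of_isUnit_det_appendCols (hkl : l ≤ k)
    (h : IsUnit (appendCols k l A C).det) : ∃ B : Matrix (Fin l) (Fin k) ℤ, B * A = 1 := by
  set M := appendCols k l A C
  have hA : A = M.submatrix id (Fin.castLE hkl) :=
    funext fun i => funext fun j => (appendCols_apply_castLE A C hkl i j).symm
  refine ⟨M⁻¹.submatrix (Fin.castLE hkl) id, ?_⟩
  rw [hA, ← submatrix_mul _ _ _ _ _ Function.bijective_id, nonsing_inv_mul _ h,
    submatrix_one _ (Fin.castLE_injective hkl)]

end appendCols

theorem stmt0_general (k l : ℕ) (hkl : l ≤ k) (A : Matrix (Fin k) (Fin l) ℤ) :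
    (∃ C : Matrix (Fin k) (Fin (k - l)) ℤ, IsUnit (appendCols k l A C).det) ↔
      Finset.univ.gcd (fun r : Fin l ↪ Fin k => (A.submatrix r id).det) = 1 := by
  rw [← Ideal.span_range_eq_top_iff_gcd_eq_one,
    ← exists_mul_eq_one_iff_span_det_submatrix_eq_top]
  constructor
  · rintro ⟨C, hC⟩
    exact exists_mul_eq_one_of_isUnit_det_appendCols A C hkl hC
  · rintro ⟨B, hBA⟩
    obtain ⟨C, hC⟩ :=
      exists_range_mulVecLin_sup_eq_top_of_mul_eq_one (ι := Fin (k - l)) hBA (by simp; omega)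
    exact ⟨C, isUnit_det_appendCols_of_sup_eq_top A C hkl hC⟩

/-- **Lemma on unimodular completion**: for `A ∈ Mat_{k×l}(ℤ)` with `k ≥ l ≥ 1`, there
exists `C ∈ Mat_{k×(k-l)}(ℤ)` with `(A|C)` invertible over `ℤ` if and only if the
greatest common divisor of all `l × l` minors of `A` equals `1`. -/
theorem stmt0 (k l : ℕ) (hl : 1 ≤ l) (hkl : l ≤ k) (A : Matrix (Fin k) (Fin l) ℤ) :
    (∃ C : Matrix (Fin k) (Fin (k - l)) ℤ, IsUnit (appendCols k l A C).det) ↔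
      Finset.univ.gcd (fun r : Fin l ↪ Fin k => (A.submatrix r id).det) = 1 :=
  stmt0_general k l hkl A
end

section
/- Let n ≥ 1 and let X be a subgroup of the weight lattice Λ of SL(n+1). Then Λ_R ⊆ X ⊆ Λ if and only if there exists d ∈ ℕ with d | (n+1) such that X = ⟨α_2, α_3, …, α_n, d·ω_n⟩_ℤ. -/
/-- The fundamental weights `ω_1, …, ω_n` of `SL(n+1)` in the weight lattice
`Λ = ℤⁿ`: `ω_j` is the `j`-th standard basis vector for `1 ≤ j ≤ n`, and by
convention `ω_0 = ω_{n+1} = 0`. -/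
def w (n : ℕ) (j : ℕ) : Fin n → ℤ := fun i => if (i : ℕ) + 1 = j then 1 else 0

/-- The simple roots of `SL(n+1)`: `α_i = 2ω_i − ω_{i−1} − ω_{i+1}` for `1 ≤ i ≤ n`. -/
def sroot (n : ℕ) (i : ℕ) : Fin n → ℤ := 2 • w n i - w n (i - 1) - w n (i + 1)

/-! The functional `φ(v) = ∑ᵢ (n + 1 - i) vᵢ` on `Λ = ℤⁿ` is `n + 1` times the `α_1`-coordinate of a
weight in the basis of simple roots: it kills `α_2, …, α_n`, sends `α_1` to `n + 1` and `ω_n` to `1`.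
Its kernel is exactly `⟨α_2, …, α_n⟩`, since `ω_j ≡ (n + 1 - j) ω_n` modulo these roots by the
recurrence `ω_j = 2ω_{j+1} - ω_{j+2} - α_{j+1}`. Hence `Λ_R = φ⁻¹((n+1)ℤ)` and
`⟨α_2, …, α_n, d ω_n⟩ = φ⁻¹(dℤ)`, and the subgroups of `Λ` containing `ker φ` correspond to the
subgroups `dℤ` of `ℤ`. -/

namespace Submodule

variable {R M : Type*} [CommRing R] [AddCommGroup M] [Module R M]

theorem comap_span_singleton_apply_eq (f : M →ₗ[R] R) (x : M) :
    (span R {f x}).comap f = span R {x} ⊔ LinearMap.ker f := by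
  rw [← comap_map_eq, map_span, Set.image_singleton]

theorem comap_span_singleton_le_iff [IsPrincipalIdealRing R] {f : M →ₗ[R] R}
    (hf : Function.Surjective f) (m : R) (X : Submodule R M) :
    (span R {m}).comap f ≤ X ↔ ∃ d, d ∣ m ∧ X = (span R {d}).comap f := by
  constructor
  · intro h
    obtain ⟨d, hd⟩ := (IsPrincipalIdealRing.principal (X.map f)).principal
    have hX : X = (span R {d}).comap f := by
      have hker : LinearMap.ker f ≤ X := fun x hx => h (by simp [LinearMap.mem_ker.mp hx])
      rw [← hd, comap_map_eq, sup_eq_left.mpr hker]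
    refine ⟨d, ?_, hX⟩
    have hm : m ∈ X.map f := by
      have h' := map_mono (f := f) h
      rw [map_comap_eq_of_surjective hf] at h'
      exact h' (mem_span_singleton_self m)
    rw [hd] at hm
    exact Ideal.mem_span_singleton.mp hm
  · rintro ⟨d, hdm, rfl⟩
    exact comap_mono (Ideal.span_singleton_le_span_singleton.mpr hdm)

end Submodule

theorem Int.comap_span_natCast_le_iff {M : Type*} [AddCommGroup M] [Module ℤ M]
    {f : M →ₗ[ℤ] ℤ} (hf : Function.Surjective f) (m : ℕ) (X : Submodule ℤ M) :
    (Submodule.span ℤ {(m : ℤ)}).comap f ≤ X ↔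
      ∃ d : ℕ, d ∣ m ∧ X = (Submodule.span ℤ {(d : ℤ)}).comap f := by
  rw [Submodule.comap_span_singleton_le_iff hf]
  constructor
  · rintro ⟨d, hdm, rfl⟩
    exact ⟨d.natAbs, by simpa using Int.natAbs_dvd_natAbs.mpr hdm,
      congrArg _ (Int.span_natAbs d).symm⟩
  · rintro ⟨d, hdm, rfl⟩
    exact ⟨d, Int.natCast_dvd_natCast.mpr hdm, rfl⟩

namespace SLWeightLattice

open Submodule

variable {n : ℕ}

lemma w_zero : w n 0 = 0 := by
  ext i; simp [w]

lemma w_of_lt {j : ℕ} (h : n < j) : w n j = 0 := by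
  ext i; simp only [w, Pi.zero_apply, ite_eq_right_iff]; omega

lemma w_succ (i : Fin n) : w n (i + 1) = Pi.single i 1 := by
  ext k; simp [w, Pi.single_apply, Fin.ext_iff]

/-- Index `i : Fin n` carries `ω_{i+1}`, so its coefficient `n - i` is the `n + 1 - j` of `ω_j`. -/
def phi (n : ℕ) : (Fin n → ℤ) →ₗ[ℤ] ℤ :=
  Fintype.linearCombination ℤ fun i : Fin n => (n : ℤ) - i

lemma phi_w {j : ℕ} (h1 : 1 ≤ j) (h2 : j ≤ n + 1) : phi n (w n j) = n + 1 - j := by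
  rcases h2.lt_or_eq with h2 | rfl
  · obtain ⟨j, rfl⟩ := Nat.exists_eq_add_of_le' h1
    rw [show j = ((⟨j, by omega⟩ : Fin n) : ℕ) from rfl, w_succ]
    simp [phi]
  · simp [w_of_lt]

lemma phi_w_self (hn : 1 ≤ n) : phi n (w n n) = 1 := by
  rw [phi_w hn (by omega)]; ring

lemma phi_smul_w_self (hn : 1 ≤ n) (z : ℤ) : phi n (z • w n n) = z := by
  rw [map_smul, phi_w_self hn, smul_eq_mul, mul_one]

lemma phi_surjective (hn : 1 ≤ n) : Function.Surjective (phi n) :=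
  fun z => ⟨z • w n n, phi_smul_w_self hn z⟩

lemma phi_sroot {i : ℕ} (h1 : 2 ≤ i) (h2 : i ≤ n) : phi n (sroot n i) = 0 := by
  rw [sroot, map_sub, map_sub, map_nsmul, phi_w (n := n) (j := i) (by omega) (by omega),
    phi_w (n := n) (j := i - 1) (by omega) (by omega),
    phi_w (n := n) (j := i + 1) (by omega) (by omega)]
  push_cast [Nat.cast_sub (by omega : 1 ≤ i)]; ring

lemma phi_sroot_one (hn : 1 ≤ n) : phi n (sroot n 1) = n + 1 := by
  rw [sroot, map_sub, map_sub, map_nsmul, Nat.sub_self, w_zero, map_zero,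
    phi_w (n := n) (j := 1) le_rfl (by omega), phi_w (n := n) (j := 2) (by omega) (by omega)]
  push_cast; ring

lemma span_sroot_le_ker : span ℤ (sroot n '' Set.Icc 2 n) ≤ LinearMap.ker (phi n) := by
  rw [span_le]
  rintro _ ⟨i, ⟨h1, h2⟩, rfl⟩
  exact phi_sroot h1 h2

lemma w_eq_sub_sroot (j : ℕ) : w n j = 2 • w n (j + 1) - w n (j + 2) - sroot n (j + 1) := by
  rw [sroot, Nat.add_sub_cancel]; abel

lemma sub_phi_smul_w_mem (hn : 1 ≤ n) (v : Fin n → ℤ) :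
    v - phi n v • w n n ∈ span ℤ (sroot n '' Set.Icc 2 n) := by
  set S := span ℤ (sroot n '' Set.Icc 2 n)
  let ψ := LinearMap.id - (phi n).smulRight (w n n)
  -- `ψ` fixes `S ≤ ker φ`; descend from `ω_{n+1} = 0` and `ω_n` to all `ω_j` by the recurrence.
  suffices h : S.comap ψ = ⊤ from (h.symm ▸ mem_top : v ∈ S.comap ψ)
  have hS : S ≤ S.comap ψ := fun s hs => by
    simpa [ψ, LinearMap.mem_ker.mp (span_sroot_le_ker hs)] using hs
  have hw : ∀ k < n, w n (n - k) ∈ S.comap ψ ∧ w n (n - k + 1) ∈ S.comap ψ := by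
    intro k hk
    induction k with
    | zero => simp [ψ, phi_w_self hn, w_of_lt]
    | succ k ih =>
      obtain ⟨h1, h2⟩ := ih (by omega)
      refine ⟨?_, by rwa [show n - (k + 1) + 1 = n - k by omega]⟩
      rw [w_eq_sub_sroot, show n - (k + 1) + 1 = n - k by omega,
        show n - (k + 1) + 2 = n - k + 1 by omega]
      exact sub_mem (sub_mem (smul_mem _ _ h1) h2)
        (hS (subset_span ⟨n - k, ⟨by omega, by omega⟩, rfl⟩))
  rw [eq_top_iff, ← (Pi.basisFun ℤ (Fin n)).span_eq, span_le]
  rintro _ ⟨i, rfl⟩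
  rw [Pi.basisFun_apply, ← w_succ]
  simpa [show n - (n - (i + 1)) = i + 1 by omega] using (hw (n - (i + 1)) (by omega)).1

lemma ker_phi (hn : 1 ≤ n) : LinearMap.ker (phi n) = span ℤ (sroot n '' Set.Icc 2 n) := by
  refine le_antisymm (fun v hv => ?_) span_sroot_le_ker
  simpa [LinearMap.mem_ker.mp hv] using sub_phi_smul_w_mem hn v

lemma rootLattice_eq_comap_phi (hn : 1 ≤ n) :
    span ℤ (sroot n '' Set.Icc 1 n) = (span ℤ {((n + 1 : ℕ) : ℤ)}).comap (phi n) := by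
  rw [Nat.cast_succ, ← phi_sroot_one hn, comap_span_singleton_apply_eq, ker_phi hn,
    ← Set.insert_Icc_add_one_left_eq_Icc hn, Set.image_insert_eq, span_insert]
  rfl

lemma span_sroot_union_eq_comap_phi (hn : 1 ≤ n) (d : ℕ) :
    span ℤ (sroot n '' Set.Icc 2 n ∪ {(d : ℤ) • w n n}) = (span ℤ {(d : ℤ)}).comap (phi n) := by
  conv_rhs => rw [← phi_smul_w_self hn d]
  rw [comap_span_singleton_apply_eq, span_union, ker_phi hn, sup_comm]

end SLWeightLattice

/-- For `n ≥ 1` and a subgroup `X` of the weight lattice `Λ` of `SL(n+1)`: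
`Λ_R ⊆ X ⊆ Λ` if and only if `X = ⟨α_2, α_3, …, α_n, d·ω_n⟩_ℤ` for some `d ∈ ℕ`
with `d ∣ (n+1)`. (The inclusion `X ⊆ Λ` is automatic for a subgroup of `Λ`.) -/
theorem stmt4 (n : ℕ) (hn : 1 ≤ n) (X : Submodule ℤ (Fin n → ℤ)) :
    Submodule.span ℤ (sroot n '' Set.Icc 1 n) ≤ X ↔
      ∃ d : ℕ, d ∣ (n + 1) ∧
        X = Submodule.span ℤ (sroot n '' Set.Icc 2 n ∪ {(d : ℤ) • w n n}) := by
  rw [SLWeightLattice.rootLattice_eq_comap_phi hn,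
    Int.comap_span_natCast_le_iff (SLWeightLattice.phi_surjective hn)]
  simp only [SLWeightLattice.span_sroot_union_eq_comap_phi hn]
end

section
/- Let n ≥ 2 be even. Then the subgroup ℤS^+ of the weight lattice Λ of SL(n+1) generated by σ_1, …, σ_{n−1} satisfies ℤS^+ = ⟨σ_2, σ_3, …, σ_{n−1}, (n/2)·ω_{n−1} + ω_n⟩_ℤ. -/
/-- `σ_i = α_i + α_{i+1}` for `1 ≤ i ≤ n−1`. -/
def sig (n : ℕ) (i : ℕ) : Fin n → ℤ := sroot n i + sroot n (i + 1)

/-- `ℤS⁺`, the subgroup of `Λ` generated by `σ_1, …, σ_{n−1}`. -/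
def ZSplus (n : ℕ) : Submodule ℤ (Fin n → ℤ) :=
  Submodule.span ℤ (sig n '' Set.Icc 1 (n - 1))

def cc (i : ℕ) : ℤ := ((i + 1) / 2 : ℕ)

theorem partial_sum (n m : ℕ) (hm : 1 ≤ m) :
    ∑ i ∈ Finset.Icc 1 m, cc i • sig n i
      = cc (m + 1) • w n m + (cc m - cc (m - 1)) • w n (m + 1) - cc m • w n (m + 2) := by
  induction m with
  | zero => omega
  | succ m ih =>
    rcases Nat.eq_or_lt_of_le hm with h1 | h1
    · have : m = 0 := by omega
      subst this
      simp only [Finset.Icc_self, Finset.sum_singleton]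
      funext k
      simp [sig, sroot, w, cc, Pi.smul_apply, smul_eq_mul]
      split_ifs <;> omega
    · have hm1 : 1 ≤ m := by omega
      rw [Finset.sum_Icc_succ_top (by omega : 1 ≤ m + 1), ih hm1]
      funext k
      simp [sig, sroot, w, cc, Pi.smul_apply, smul_eq_mul]
      split_ifs <;> omega

theorem sum_eq_v (n : ℕ) (hn : 2 ≤ n) (hne : Even n) :
    ∑ i ∈ Finset.Icc 1 (n - 1), cc i • sig n i
      = ((n / 2 : ℕ) : ℤ) • w n (n - 1) + w n n := by
  have h2 : n % 2 = 0 := Nat.even_iff.mp hne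
  rw [partial_sum n (n - 1) (by omega)]
  have e1 : n - 1 + 1 = n := by omega
  have e2 : n - 1 + 2 = n + 1 := by omega
  rw [e1, e2]
  have hcn : cc n = ((n / 2 : ℕ) : ℤ) := by simp [cc]; omega
  have hb : cc (n - 1) - cc (n - 1 - 1) = 1 := by simp [cc]; omega
  have hw : w n (n + 1) = 0 := by
    funext k; simp [w]; omega
  rw [hcn, hb, hw, one_smul]
  simp

/-- For `n ≥ 2` even: `ℤS⁺ = ⟨σ_2, σ_3, …, σ_{n−1}, (n/2)·ω_{n−1} + ω_n⟩_ℤ`. -/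
theorem stmt6 (n : ℕ) (hn : 2 ≤ n) (hne : Even n) :
    ZSplus n = Submodule.span ℤ
      (sig n '' Set.Icc 2 (n - 1) ∪ {((n / 2 : ℕ) : ℤ) • w n (n - 1) + w n n}) := by
  set v : Fin n → ℤ := ((n / 2 : ℕ) : ℤ) • w n (n - 1) + w n n with hv
  have hsplit : Finset.Icc 1 (n - 1) = insert 1 (Finset.Icc 2 (n - 1)) := by
    ext j; simp [Finset.mem_Icc]; omega
  have hmem : ∀ i ∈ Set.Icc 2 (n - 1), sig n i ∈
      Submodule.span ℤ (sig n '' Set.Icc 2 (n - 1) ∪ {v}) :=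
    fun i hi => Submodule.subset_span (Or.inl ⟨i, hi, rfl⟩)
  apply le_antisymm
  · rw [ZSplus, Submodule.span_le]
    rintro x ⟨i, hi, rfl⟩
    simp only [Set.mem_Icc] at hi
    rcases eq_or_lt_of_le hi.1 with h1 | h1
    · -- i = 1
      subst h1
      have hs := sum_eq_v n hn hne
      rw [hsplit, Finset.sum_insert (by simp)] at hs
      have hcc1 : cc 1 = 1 := by simp [cc]
      rw [hcc1, one_smul] at hs
      have : sig n 1 = v - ∑ i ∈ Finset.Icc 2 (n - 1), cc i • sig n i := by
        rw [hv, ← hs]; ring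
      rw [this]
      exact Submodule.sub_mem _ (Submodule.subset_span (Or.inr rfl))
        (Submodule.sum_mem _ fun i hi => Submodule.smul_mem _ _
          (hmem i (by simpa [Finset.mem_Icc, Set.mem_Icc] using hi)))
    · exact Submodule.subset_span (Or.inl ⟨i, ⟨by omega, hi.2⟩, rfl⟩)
  · rw [Submodule.span_le]
    rintro x (⟨i, hi, rfl⟩ | hx)
    · exact Submodule.subset_span ⟨i, ⟨le_trans one_le_two hi.1, hi.2⟩, rfl⟩
    · rcases hx with rfl
      rw [hv, ← sum_eq_v n hn hne]
      exact Submodule.sum_mem _ fun i hi => Submodule.smul_mem _ _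
        (Submodule.subset_span ⟨i, by simpa [Set.mem_Icc, Finset.mem_Icc] using hi, rfl⟩)
end

section
/- Let n ≥ 2 be even. Then the weight lattice Λ of SL(n+1) is the internal direct sum Λ = ℤS^+ ⊕ ℤω_{n−1}, i.e. Λ = ℤS^+ + ℤω_{n−1} and ℤS^+ ∩ ℤω_{n−1} = 0. -/
def aco (n j : ℕ) : ℤ :=
  if 1 ≤ j ∧ j ≤ n ∧ j % 2 = 0 then -(j:ℤ)
  else if 1 ≤ j ∧ j ≤ n then (n:ℤ) - j + 1 else 0

noncomputable def fco (n : ℕ) : (Fin n → ℤ) →ₗ[ℤ] ℤ :=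
  ∑ k : Fin n, aco n ((k:ℕ)+1) • LinearMap.proj k

lemma fco_apply (n : ℕ) (x : Fin n → ℤ) : fco n x = ∑ k : Fin n, aco n ((k:ℕ)+1) * x k := by
  simp [fco]

lemma w_zero {n j : ℕ} (h : n < j ∨ j = 0) : w n j = 0 := by
  funext i
  have := i.isLt
  simp only [w]
  rw [if_neg (by omega)]
  rfl

lemma sig_w (n i : ℕ) (h : 1 ≤ i) :
    sig n i = w n i + w n (i+1) - w n (i-1) - w n (i+2) := by
  unfold sig sroot
  rw [show i + 1 - 1 = i from by omega, show i + 1 + 1 = i + 2 from by omega]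
  abel

lemma fco_w (n j : ℕ) : fco n (w n j) = aco n j := by
  rw [fco_apply]
  by_cases h : 1 ≤ j ∧ j ≤ n
  · rw [Finset.sum_eq_single (⟨j-1, by omega⟩ : Fin n)]
    · simp only [w]
      rw [if_pos (by omega), mul_one]
      congr 1
      omega
    · intro b _ hb
      simp only [w]
      rw [if_neg, mul_zero]
      intro hc
      apply hb
      apply Fin.ext
      show (b:ℕ) = j - 1
      omega
    · intro hc
      exact absurd (Finset.mem_univ _) hc
  · rw [Finset.sum_eq_zero, aco, if_neg (by omega), if_neg (by omega)]
    intro k _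
    have := k.isLt
    simp only [w]
    rw [if_neg (by omega), mul_zero]

lemma fco_sig (n i : ℕ) (hne : n % 2 = 0) (h1 : 1 ≤ i) (h2 : i ≤ n - 1) :
    fco n (sig n i) = 0 := by
  rw [sig_w n i h1, map_sub, map_sub, map_add, fco_w, fco_w, fco_w, fco_w]
  unfold aco
  split_ifs <;> omega

lemma ZSplus_le_ker (n : ℕ) (hne : n % 2 = 0) : ZSplus n ≤ LinearMap.ker (fco n) := by
  rw [ZSplus, Submodule.span_le]
  rintro y ⟨i, hi, rfl⟩
  rw [Set.mem_Icc] at hi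
  exact LinearMap.mem_ker.2 (fco_sig n i hne hi.1 hi.2)

lemma Psum (n m : ℕ) (h : 1 ≤ m) :
    ∑ i ∈ Finset.Icc 1 m, sig n i = w n 2 + w n m - w n (m+2) := by
  induction m, h using Nat.le_induction with
  | base =>
    rw [Finset.Icc_self, Finset.sum_singleton, sig_w n 1 le_rfl,
      w_zero (Or.inr rfl)]
    abel
  | succ m hm ih =>
    rw [Finset.sum_Icc_succ_top (by omega), ih, sig_w n (m+1) (by omega),
      show m + 1 - 1 = m from by omega, show m + 1 + 2 = m + 3 from by omega,
      show m + 1 + 1 = m + 2 from by omega]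
    abel

/-- For `n ≥ 2` even, the weight lattice `Λ` of `SL(n+1)` is the internal direct sum
`Λ = ℤS⁺ ⊕ ℤω_{n−1}`: i.e. `Λ = ℤS⁺ + ℤω_{n−1}` and `ℤS⁺ ∩ ℤω_{n−1} = 0`. -/
theorem stmt7 (n : ℕ) (hn : 2 ≤ n) (hne : Even n) :
    ZSplus n ⊔ Submodule.span ℤ {w n (n - 1)} = ⊤ ∧
      ZSplus n ⊓ Submodule.span ℤ {w n (n - 1)} = ⊥ := by
  have hne' : n % 2 = 0 := Nat.even_iff.1 hne
  set S := ZSplus n ⊔ Submodule.span ℤ {w n (n - 1)} with hS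
  have hwn1 : w n (n-1) ∈ S :=
    le_sup_right (α := Submodule ℤ (Fin n → ℤ)) (Submodule.mem_span_singleton_self _)
  have hP : ∀ m, 1 ≤ m → m ≤ n - 1 → w n 2 + w n m - w n (m+2) ∈ S := by
    intro m h1 h2
    rw [← Psum n m h1]
    refine Submodule.sum_mem _ fun i hi => ?_
    rw [Finset.mem_Icc] at hi
    exact le_sup_left (α := Submodule ℤ (Fin n → ℤ))
      (Submodule.subset_span ⟨i, Set.mem_Icc.2 ⟨hi.1, le_trans hi.2 h2⟩, rfl⟩)
  have hw2 : w n 2 ∈ S := by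
    have := hP (n-1) (by omega) le_rfl
    rw [show n - 1 + 2 = n + 1 from by omega,
      show w n (n+1) = 0 from w_zero (Or.inl (by omega))] at this
    have h2 : w n 2 = (w n 2 + w n (n-1) - 0) - w n (n-1) := by abel
    rw [h2]
    exact sub_mem this hwn1
  have hdiff : ∀ m, 1 ≤ m → m ≤ n - 1 → w n m - w n (m+2) ∈ S := by
    intro m h1 h2
    have h3 : w n m - w n (m+2) = (w n 2 + w n m - w n (m+2)) - w n 2 := by abel
    rw [h3]
    exact sub_mem (hP m h1 h2) hw2
  have hodd : ∀ t, 2*t ≤ n - 2 → w n (n-1-2*t) ∈ S := by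
    intro t
    induction t with
    | zero => intro _; simpa using hwn1
    | succ t ih =>
      intro ht
      have h4 : w n (n-1-2*(t+1)) =
          (w n (n-1-2*(t+1)) - w n (n-1-2*(t+1)+2)) + w n (n-1-2*t) := by
        rw [show n-1-2*(t+1)+2 = n-1-2*t from by omega]; abel
      rw [h4]
      exact add_mem (hdiff _ (by omega) (by omega)) (ih (by omega))
  have heven : ∀ t, 2+2*t ≤ n → w n (2+2*t) ∈ S := by
    intro t
    induction t with
    | zero => intro _; simpa using hw2
    | succ t ih =>
      intro ht
      have h4 : w n (2+2*(t+1)) = w n (2+2*t) - (w n (2+2*t) - w n (2+2*t+2)) := by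
        rw [show 2+2*(t+1) = 2+2*t+2 from by omega]; abel
      rw [h4]
      exact sub_mem (ih (by omega)) (hdiff _ (by omega) (by omega))
  have hall : ∀ j, 1 ≤ j → j ≤ n → w n j ∈ S := by
    intro j h1 h2
    rcases Nat.even_or_odd j with hj | hj
    · rw [Nat.even_iff] at hj
      obtain ⟨t, rfl⟩ : ∃ t, j = 2 + 2*t := ⟨(j-2)/2, by omega⟩
      exact heven t (by omega)
    · rw [Nat.odd_iff] at hj
      obtain ⟨t, rfl⟩ : ∃ t, j = n - 1 - 2*t := ⟨(n-1-j)/2, by omega⟩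
      exact hodd t (by omega)
  constructor
  · rw [eq_top_iff]
    intro x _
    rw [pi_eq_sum_univ x]
    refine Submodule.sum_mem _ fun i _ => Submodule.smul_mem _ _ ?_
    have hwi : (fun j => if i = j then (1:ℤ) else 0) = w n ((i:ℕ)+1) := by
      funext j
      simp only [w]
      by_cases hij : i = j
      · rw [if_pos hij, if_pos (by rw [hij])]
      · rw [if_neg hij, if_neg (fun hc => hij (Fin.ext (by omega)))]
    rw [hwi]
    exact hall _ (by omega) i.isLt
  · rw [eq_bot_iff]
    rintro x ⟨hx1, hx2⟩
    obtain ⟨c, rfl⟩ := Submodule.mem_span_singleton.1 hx2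
    have h5 : fco n (c • w n (n-1)) = 0 := ZSplus_le_ker n hne' hx1
    rw [map_smul, fco_w, smul_eq_mul] at h5
    have h6 : aco n (n-1) = 2 := by
      unfold aco
      split_ifs <;> omega
    rw [h6] at h5
    have : c = 0 := by omega
    rw [this, zero_smul]
    rfl
end

section
/- Let n ≥ 2 be even and let X be a subgroup of the weight lattice Λ of SL(n+1). Then X has full rank (rank n) and contains σ_1, …, σ_{n−1} if and only if there exists k ∈ ℕ with k ≥ 1 such that X = ℤS^+ ⊕ ℤ(k·ω_{n−1}) (internal direct sum). -/
set_option linter.unusedVariables false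
set_option linter.unnecessarySimpa false
set_option maxHeartbeats 1000000

namespace Aux


def dd (n j : ℕ) : Fin n → ℤ := w n j - w n (j - 1)

lemma w_zero (n : ℕ) : w n 0 = 0 := by
  funext i; simp [w]

lemma w_big (n j : ℕ) (h : n < j) : w n j = 0 := by
  funext i; simp only [w, Pi.zero_apply, ite_eq_right_iff]
  intro hi; have := i.isLt; omega

lemma sig_w (n i : ℕ) (h : 1 ≤ i) :
    sig n i = w n i + w n (i + 1) - w n (i - 1) - w n (i + 2) := by
  funext x
  have hx := x.isLt
  simp only [sig, sroot, w, Pi.add_apply, Pi.sub_apply, Pi.smul_apply, nsmul_eq_mul, Nat.cast_ofNat, Pi.mul_apply, Pi.ofNat_apply]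
  split_ifs <;> omega

lemma sig_dd (n i : ℕ) (h : 1 ≤ i) :
    sig n i = dd n i - dd n (i + 2) := by
  rw [sig_w n i h]
  funext x
  simp only [dd, Pi.sub_apply, Pi.add_apply]
  have h1 : i + 2 - 1 = i + 1 := by omega
  rw [h1]
  ring

lemma sig_mem (n i : ℕ) (h1 : 1 ≤ i) (h2 : i ≤ n - 1) : sig n i ∈ ZSplus n :=
  Submodule.subset_span ⟨i, Set.mem_Icc.2 ⟨h1, h2⟩, rfl⟩

lemma dd_mem_sub (n : ℕ) (hn : 2 ≤ n) (i : ℕ) (h1 : 1 ≤ i) (h2 : i ≤ n - 1) :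
    dd n i - dd n (i + 2) ∈ ZSplus n := by
  rw [← sig_dd n i h1]; exact sig_mem n i h1 h2

/-- odd chain -/
lemma chain_odd (n : ℕ) (hn : 2 ≤ n) : ∀ t, 2 * t + 1 ≤ n + 1 →
    dd n 1 - dd n (2 * t + 1) ∈ ZSplus n := by
  intro t
  induction t with
  | zero => intro _; simpa using (ZSplus n).zero_mem
  | succ s ih =>
    intro h
    have h1 : dd n 1 - dd n (2 * s + 1) ∈ ZSplus n := ih (by omega)
    have h2 : dd n (2 * s + 1) - dd n (2 * s + 1 + 2) ∈ ZSplus n :=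
      dd_mem_sub n hn (2 * s + 1) (by omega) (by omega)
    have h3 := (ZSplus n).add_mem h1 h2
    have he : 2 * (s + 1) + 1 = 2 * s + 1 + 2 := by ring
    rw [he]
    convert h3 using 1
    abel

lemma chain_even (n : ℕ) (hn : 2 ≤ n) : ∀ t, 2 * t + 2 ≤ n →
    dd n 2 - dd n (2 * t + 2) ∈ ZSplus n := by
  intro t
  induction t with
  | zero => intro _; simpa using (ZSplus n).zero_mem
  | succ s ih =>
    intro h
    have h1 : dd n 2 - dd n (2 * s + 2) ∈ ZSplus n := ih (by omega)
    have h2 : dd n (2 * s + 2) - dd n (2 * s + 2 + 2) ∈ ZSplus n :=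
      dd_mem_sub n hn (2 * s + 2) (by omega) (by omega)
    have h3 := (ZSplus n).add_mem h1 h2
    have he : 2 * (s + 1) + 2 = 2 * s + 2 + 2 := by ring
    rw [he]
    convert h3 using 1
    abel

/-- partial sums: `w (2t) − t (dd 1 + dd 2) ∈ ℤS` for `t ≤ n/2`. -/
lemma partial_mem (n : ℕ) (hn : 2 ≤ n) (hne : n % 2 = 0) : ∀ t, 2 * t ≤ n →
    w n (2 * t) - (t : ℤ) • (dd n 1 + dd n 2) ∈ ZSplus n := by
  intro t
  induction t with
  | zero => intro _; simpa [w_zero] using (ZSplus n).zero_mem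
  | succ s ih =>
    intro h
    have h1 := ih (by omega)
    have h2 : dd n 1 - dd n (2 * s + 1) ∈ ZSplus n := chain_odd n hn s (by omega)
    have h3 : dd n 2 - dd n (2 * s + 2) ∈ ZSplus n := chain_even n hn s (by omega)
    have h4 := (ZSplus n).sub_mem ((ZSplus n).sub_mem h1 h2) h3
    convert h4 using 1
    have e1 : w n (2 * (s + 1)) = w n (2 * s) + dd n (2 * s + 1) + dd n (2 * s + 2) := by
      funext x
      simp only [dd, Pi.add_apply, Pi.sub_apply]
      have e2 : 2 * s + 1 - 1 = 2 * s := by omega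
      have e3 : 2 * s + 2 - 1 = 2 * s + 1 := by omega
      have e4 : 2 * (s + 1) = 2 * s + 2 := by ring
      rw [e2, e3, e4]; ring
    rw [e1]
    push_cast
    module


/-- `(m+1) dd1 + m dd2 ∈ ℤS` where `m = n/2`. -/
lemma E1_mem (n : ℕ) (hn : 2 ≤ n) (hne : n % 2 = 0) :
    ((n / 2 : ℕ) + 1 : ℤ) • dd n 1 + ((n / 2 : ℕ) : ℤ) • dd n 2 ∈ ZSplus n := by
  have h1 : dd n 1 - dd n (n + 1) ∈ ZSplus n := by
    have := chain_odd n hn (n / 2) (by omega)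
    have e : 2 * (n / 2) + 1 = n + 1 := by omega
    rwa [e] at this
  have h2 : w n n - ((n / 2 : ℕ) : ℤ) • (dd n 1 + dd n 2) ∈ ZSplus n := by
    have := partial_mem n hn hne (n / 2) (by omega)
    have e : 2 * (n / 2) = n := by omega
    rwa [e] at this
  have h3 := (ZSplus n).sub_mem h1 h2
  convert h3 using 1
  have e1 : dd n (n + 1) = - w n n := by
    funext x
    simp only [dd, Pi.sub_apply, Pi.neg_apply, w_big n (n+1) (by omega)]
    have e2 : n + 1 - 1 = n := by omega
    rw [e2]; simp
  rw [e1]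
  module

/-- `w(n−1) − (m dd1 + (m−1) dd2) ∈ ℤS`. -/
lemma E2_mem (n : ℕ) (hn : 2 ≤ n) (hne : n % 2 = 0) :
    w n (n - 1) - (((n / 2 : ℕ) : ℤ) • dd n 1 + ((n / 2 : ℕ) - 1 : ℤ) • dd n 2) ∈ ZSplus n := by
  have h1 : w n (n - 2) - ((n / 2 - 1 : ℕ) : ℤ) • (dd n 1 + dd n 2) ∈ ZSplus n := by
    have := partial_mem n hn hne (n / 2 - 1) (by omega)
    have e : 2 * (n / 2 - 1) = n - 2 := by omega
    rwa [e] at this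
  have h2 : dd n 1 - dd n (n - 1) ∈ ZSplus n := by
    have := chain_odd n hn (n / 2 - 1) (by omega)
    have e : 2 * (n / 2 - 1) + 1 = n - 1 := by omega
    rwa [e] at this
  have h3 := (ZSplus n).sub_mem h1 h2
  convert h3 using 1
  have e1 : w n (n - 1) = w n (n - 2) + dd n (n - 1) := by
    funext x
    simp only [dd, Pi.add_apply, Pi.sub_apply]
    have e2 : n - 1 - 1 = n - 2 := by omega
    rw [e2]; ring
  rw [e1]
  have e3 : ((n / 2 - 1 : ℕ) : ℤ) = ((n / 2 : ℕ) : ℤ) - 1 := by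
    have : 1 ≤ n / 2 := by omega
    push_cast [this]; ring
  rw [e3]
  module

lemma d1_mem (n : ℕ) (hn : 2 ≤ n) (hne : n % 2 = 0) :
    dd n 1 - ((n / 2 : ℕ) : ℤ) • w n (n - 1) ∈ ZSplus n := by
  have h1 := (ZSplus n).smul_mem (1 - ((n / 2 : ℕ) : ℤ)) (E1_mem n hn hne)
  have h2 := (ZSplus n).smul_mem (-((n / 2 : ℕ) : ℤ)) (E2_mem n hn hne)
  have h3 := (ZSplus n).add_mem h1 h2
  convert h3 using 1
  module

lemma d2_mem (n : ℕ) (hn : 2 ≤ n) (hne : n % 2 = 0) :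
    dd n 2 + (((n / 2 : ℕ) : ℤ) + 1) • w n (n - 1) ∈ ZSplus n := by
  have h1 := (ZSplus n).smul_mem ((n / 2 : ℕ) : ℤ) (E1_mem n hn hne)
  have h2 := (ZSplus n).smul_mem (((n / 2 : ℕ) : ℤ) + 1) (E2_mem n hn hne)
  have h3 := (ZSplus n).add_mem h1 h2
  convert h3 using 1
  module


def MM (n : ℕ) : Submodule ℤ (Fin n → ℤ) :=
  ZSplus n ⊔ Submodule.span ℤ {w n (n - 1)}

lemma ZS_le_MM (n : ℕ) : ZSplus n ≤ MM n := le_sup_left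

lemma w_n1_mem_MM (n : ℕ) : w n (n - 1) ∈ MM n :=
  le_sup_right (α := Submodule ℤ (Fin n → ℤ)) (Submodule.mem_span_singleton_self _)

lemma dd_mem_MM (n : ℕ) (hn : 2 ≤ n) (hne : n % 2 = 0) (j : ℕ) (h1 : 1 ≤ j) (h2 : j ≤ n) :
    dd n j ∈ MM n := by
  rcases Nat.even_or_odd j with he | ho
  · -- even : dd j = [dd2 + (m+1)w] - (dd2 - dd j) - (m+1)•w
    obtain ⟨t, ht⟩ := he
    have ht' : j = 2 * (t - 1) + 2 := by omega
    have hc : dd n 2 - dd n j ∈ ZSplus n := by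
      rw [ht']; exact chain_even n hn (t - 1) (by omega)
    have hA := ZS_le_MM n ((ZSplus n).sub_mem (d2_mem n hn hne) hc)
    have hB : (((n / 2 : ℕ) : ℤ) + 1) • w n (n - 1) ∈ MM n :=
      Submodule.smul_mem _ _ (w_n1_mem_MM n)
    have := (MM n).sub_mem hA hB
    convert this using 1
    module
  · obtain ⟨t, ht⟩ := ho
    have hc : dd n 1 - dd n j ∈ ZSplus n := by
      rw [ht]; exact chain_odd n hn t (by omega)
    have hA := ZS_le_MM n ((ZSplus n).sub_mem (d1_mem n hn hne) hc)
    have hB : ((n / 2 : ℕ) : ℤ) • w n (n - 1) ∈ MM n :=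
      Submodule.smul_mem _ _ (w_n1_mem_MM n)
    have := (MM n).add_mem hA hB
    convert this using 1
    module

lemma w_mem_MM (n : ℕ) (hn : 2 ≤ n) (hne : n % 2 = 0) :
    ∀ j, j ≤ n → w n j ∈ MM n := by
  intro j
  induction j with
  | zero => intro _; rw [w_zero]; exact (MM n).zero_mem
  | succ s ih =>
    intro h
    have e : w n (s + 1) = w n s + dd n (s + 1) := by
      funext x; simp only [dd, Pi.add_apply, Pi.sub_apply, Nat.add_sub_cancel]; ring
    rw [e]
    exact (MM n).add_mem (ih (by omega)) (dd_mem_MM n hn hne (s + 1) (by omega) h)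

lemma MM_eq_top (n : ℕ) (hn : 2 ≤ n) (hne : n % 2 = 0) : MM n = ⊤ := by
  rw [eq_top_iff]
  rintro v -
  rw [pi_eq_sum_univ v]
  refine Submodule.sum_mem _ fun i _ => Submodule.smul_mem _ _ ?_
  have e : (fun j => if i = j then (1:ℤ) else 0) = w n ((i : ℕ) + 1) := by
    funext j
    simp only [w]
    by_cases h : i = j
    · subst h; simp
    · rw [if_neg h, if_neg (by simpa [Fin.ext_iff, eq_comm] using h)]
  rw [e]
  exact w_mem_MM n hn hne ((i : ℕ) + 1) i.isLt


/-- coefficient: `c i = i/2 − n/2` for even `i`, `i/2 + 1` for odd `i`. -/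
def cc (n i : ℕ) : ℤ := if i % 2 = 0 then ((i / 2 : ℕ) : ℤ) - ((n / 2 : ℕ) : ℤ) else ((i / 2 : ℕ) : ℤ) + 1

/-- the linear functional with kernel `ℤS⁺` -/
def phi (n : ℕ) : (Fin n → ℤ) →ₗ[ℤ] ℤ where
  toFun v := ∑ i : Fin n, cc n (i : ℕ) * v i
  map_add' a b := by
    simp only [Pi.add_apply, mul_add]
    exact Finset.sum_add_distrib
  map_smul' c a := by
    simp only [Pi.smul_apply, smul_eq_mul, RingHom.id_apply, Finset.mul_sum]
    congr 1; funext i; ring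

lemma phi_w (n j : ℕ) :
    phi n (w n j) = if 1 ≤ j ∧ j ≤ n then cc n (j - 1) else 0 := by
  simp only [phi, LinearMap.coe_mk, AddHom.coe_mk, w]
  split_ifs with h
  · rw [Finset.sum_eq_single (⟨j - 1, by omega⟩ : Fin n)]
    · simp only []
      rw [if_pos (by omega)]
      ring
    · intro b _ hb
      rw [if_neg (by simp [Fin.ext_iff] at hb ⊢; omega), mul_zero]
    · intro hx; exact absurd (Finset.mem_univ _) hx
  · apply Finset.sum_eq_zero
    intro i _
    rw [if_neg (by have := i.isLt; omega), mul_zero]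

lemma phi_sig (n : ℕ) (hn : 2 ≤ n) (hne : n % 2 = 0) (i : ℕ) (h1 : 1 ≤ i) (h2 : i ≤ n - 1) :
    phi n (sig n i) = 0 := by
  rw [sig_w n i h1]
  rw [map_sub, map_sub, map_add]
  rw [phi_w, phi_w, phi_w, phi_w]
  simp only [cc]
  split_ifs <;> omega

lemma phi_ZS (n : ℕ) (hn : 2 ≤ n) (hne : n % 2 = 0) (v : Fin n → ℤ) (hv : v ∈ ZSplus n) :
    phi n v = 0 := by
  have : ZSplus n ≤ LinearMap.ker (phi n) := by
    rw [ZSplus, Submodule.span_le]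
    rintro x ⟨i, hi, rfl⟩
    rw [Set.mem_Icc] at hi
    exact LinearMap.mem_ker.2 (phi_sig n hn hne i hi.1 hi.2)
  exact LinearMap.mem_ker.1 (this hv)

lemma phi_wn1 (n : ℕ) (hn : 2 ≤ n) (hne : n % 2 = 0) : phi n (w n (n - 1)) = -1 := by
  rw [phi_w, if_pos (by omega)]
  simp only [cc]
  split_ifs <;> omega


end Aux

open Aux in
/-- For `n ≥ 2` even and a subgroup `X` of the weight lattice `Λ` of `SL(n+1)`:
`X` has full rank `n` and contains `σ_1, …, σ_{n−1}` if and only if there exists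
`k ≥ 1` with `X = ℤS⁺ ⊕ ℤ(k·ω_{n−1})` (internal direct sum). -/
theorem stmt8 (n : ℕ) (hn : 2 ≤ n) (hne : Even n) (X : Submodule ℤ (Fin n → ℤ)) :
    (Module.finrank ℤ X = n ∧ ∀ i ∈ Set.Icc 1 (n - 1), sig n i ∈ X) ↔
      ∃ k : ℕ, 1 ≤ k ∧
        X = ZSplus n ⊔ Submodule.span ℤ {(k : ℤ) • w n (n - 1)} ∧
        ZSplus n ⊓ Submodule.span ℤ {(k : ℤ) • w n (n - 1)} = ⊥ := by
  have hne2 : n % 2 = 0 := Nat.even_iff.mp hne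
  have hrankTop : Module.finrank ℤ (Fin n → ℤ) = n := by
    rw [Module.finrank_pi, Fintype.card_fin]
  haveI : Module.Finite ℤ X := Module.Finite.iff_fg.mpr (IsNoetherian.noetherian X)
  -- the intersection statement, proved once for all k ≥ 1
  have hdisj : ∀ k : ℕ, 1 ≤ k →
      ZSplus n ⊓ Submodule.span ℤ {(k : ℤ) • w n (n - 1)} = ⊥ := by
    intro k hk
    rw [eq_bot_iff]
    rintro v ⟨hv1, hv2⟩
    obtain ⟨c, rfl⟩ := Submodule.mem_span_singleton.1 hv2
    have h0 := phi_ZS n hn hne2 _ hv1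
    rw [map_smul, map_smul, phi_wn1 n hn hne2] at h0
    simp only [smul_eq_mul, mul_neg, mul_one] at h0
    have hc : c = 0 := by
      have h' : c * (k : ℤ) = 0 := by linarith
      rcases mul_eq_zero.1 h' with h | h
      · exact h
      · exact absurd h (Int.natCast_ne_zero.mpr (by omega))
    simp [hc]
  constructor
  · rintro ⟨hr, hsig⟩
    have hZX : ZSplus n ≤ X := by
      rw [ZSplus, Submodule.span_le]
      rintro x ⟨i, hi, rfl⟩
      exact hsig i hi
    -- find a nonzero multiple of w (n-1) in X
    have hamem : ∃ a : ℤ, a ≠ 0 ∧ a • w n (n - 1) ∈ X := by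
      let b := (Module.finBasis ℤ X).reindex (finCongr hr)
      set f : Fin (n + 1) → (Fin n → ℤ) :=
        Fin.snoc (fun i => (b i : Fin n → ℤ)) (w n (n - 1)) with hf
      have hni : ¬ LinearIndependent ℤ f := by
        intro h
        have := h.fintype_card_le_finrank
        rw [Fintype.card_fin, hrankTop] at this
        omega
      obtain ⟨g, hsum, j, hj⟩ := Fintype.not_linearIndependent_iff.1 hni
      rw [Fin.sum_univ_castSucc] at hsum
      simp only [hf, Fin.snoc_castSucc, Fin.snoc_last] at hsum
      have hbi : LinearIndependent ℤ (fun i => (b i : Fin n → ℤ)) :=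
        b.linearIndependent.map' X.subtype X.ker_subtype
      by_cases ha : g (Fin.last n) = 0
      · exfalso
        rw [ha, zero_smul, add_zero] at hsum
        have hz := linearIndependent_iff'.1 hbi Finset.univ (fun i => g i.castSucc) hsum
        rcases Fin.eq_castSucc_or_eq_last j with ⟨j', rfl⟩ | rfl
        · exact hj (hz j' (Finset.mem_univ _))
        · exact hj ha
      · refine ⟨g (Fin.last n), ha, ?_⟩
        rw [eq_neg_of_add_eq_zero_right hsum]
        exact Submodule.neg_mem _ (Submodule.sum_mem _ fun i _ =>
          Submodule.smul_mem _ _ (b i).2)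
    obtain ⟨a, ha, haX⟩ := hamem
    -- the ideal of multiples
    set T : Submodule ℤ ℤ :=
      Submodule.comap (LinearMap.toSpanSingleton ℤ (Fin n → ℤ) (w n (n - 1))) X with hT
    have hmemT : ∀ c : ℤ, c ∈ T ↔ c • w n (n - 1) ∈ X := by
      intro c
      rw [hT, Submodule.mem_comap, LinearMap.toSpanSingleton_apply]
    obtain ⟨g0, hg0⟩ := (IsPrincipalIdealRing.principal T).principal
    have hg00 : g0 ≠ 0 := by
      rintro rfl
      rw [Submodule.span_zero_singleton] at hg0
      have h := (hmemT a).2 haX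
      rw [hg0] at h
      exact ha (by simpa using h)
    refine ⟨g0.natAbs, by omega, ?_, hdisj g0.natAbs (by omega)⟩
    have hkw : (g0.natAbs : ℤ) • w n (n - 1) ∈ X := by
      have hg0T : g0 • w n (n - 1) ∈ X := (hmemT g0).1 (hg0 ▸ Submodule.mem_span_singleton_self g0)
      rcases Int.natAbs_eq g0 with he | he
      · rw [← he]; exact hg0T
      · have hgoal : ((g0.natAbs : ℤ)) • w n (n - 1) = -(g0 • w n (n - 1)) := by
          conv_rhs => rw [he]
          rw [neg_smul, neg_neg]
        rw [hgoal]
        exact Submodule.neg_mem _ hg0T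
    refine le_antisymm ?_ ?_
    · intro x hx
      have hxM : x ∈ MM n := by rw [MM_eq_top n hn hne2]; trivial
      obtain ⟨s, hs, y, hy, rfl⟩ := Submodule.mem_sup.1 hxM
      obtain ⟨c, rfl⟩ := Submodule.mem_span_singleton.1 hy
      have hcX : c • w n (n - 1) ∈ X := by
        have : c • w n (n - 1) = s + c • w n (n - 1) - s := by abel
        rw [this]
        exact Submodule.sub_mem _ hx (hZX hs)
      have hcT : c ∈ T := (hmemT c).2 hcX
      rw [hg0] at hcT
      obtain ⟨t, rfl⟩ := Submodule.mem_span_singleton.1 hcT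
      refine Submodule.add_mem _ (Submodule.mem_sup_left hs) (Submodule.mem_sup_right ?_)
      rw [Submodule.mem_span_singleton]
      rcases Int.natAbs_eq g0 with he | he
      · exact ⟨t, by rw [smul_smul, smul_eq_mul, ← he]⟩
      · refine ⟨-t, ?_⟩
        rw [smul_smul]
        conv_rhs => rw [smul_eq_mul, he]
        congr 1
        ring
    · refine sup_le hZX ?_
      rw [Submodule.span_le, Set.singleton_subset_iff]
      exact hkw
  · rintro ⟨k, hk, hXeq, -⟩
    have hk0 : (k : ℤ) ≠ 0 := Int.natCast_ne_zero.mpr (by omega)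
    constructor
    · -- finrank X = n
      refine le_antisymm ?_ ?_
      · exact le_trans (Submodule.finrank_le X) (le_of_eq hrankTop)
      · -- injective map v ↦ k • v into X
        have hmem : ∀ v : Fin n → ℤ, (k : ℤ) • v ∈ X := by
          intro v
          have hv : v ∈ MM n := by rw [MM_eq_top n hn hne2]; trivial
          obtain ⟨s, hs, y, hy, rfl⟩ := Submodule.mem_sup.1 hv
          obtain ⟨c, rfl⟩ := Submodule.mem_span_singleton.1 hy
          rw [hXeq, smul_add]
          refine Submodule.add_mem _ (Submodule.mem_sup_left (Submodule.smul_mem _ _ hs)) ?_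
          have : (k : ℤ) • c • w n (n - 1) = c • ((k : ℤ) • w n (n - 1)) := by
            rw [smul_smul, smul_smul, mul_comm]
          rw [this]
          exact Submodule.mem_sup_right (Submodule.smul_mem _ _
            (Submodule.mem_span_singleton_self _))
        let f : (Fin n → ℤ) →ₗ[ℤ] X :=
          LinearMap.codRestrict X ((k : ℤ) • LinearMap.id) (fun v => hmem v)
        have hinj : Function.Injective f := by
          intro a b hab
          have : (k : ℤ) • a = (k : ℤ) • b := congrArg Subtype.val hab
          exact smul_right_injective _ hk0 this
        calc n = Module.finrank ℤ (Fin n → ℤ) := hrankTop.symm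
          _ ≤ Module.finrank ℤ X := LinearMap.finrank_le_finrank_of_injective hinj
    · rintro i ⟨hi1, hi2⟩
      rw [hXeq]
      exact Submodule.mem_sup_left (sig_mem n i hi1 hi2)
end

section
/- Let n ≥ 3 be odd and set d = (n+1)/2. Then the subgroup ℤS^+ of the weight lattice Λ of SL(n+1) generated by σ_1, …, σ_{n−1} satisfies ℤS^+ = ⟨σ_2, σ_3, …, σ_{n−1}, d·ω_{n−1}⟩_ℤ. -/
lemma sum_shift (s : Finset ℕ) (k m : ℕ) (b : ℕ → ℤ) :
    (∑ i ∈ s, if m = i + k then b i else 0)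
      = if k ≤ m ∧ m - k ∈ s then b (m - k) else 0 := by
  by_cases h : k ≤ m
  · have h2 : ∀ i ∈ s, (if m = i + k then b i else 0) = (if m - k = i then b i else 0) := by
      intro i _
      have : (m = i + k) ↔ (m - k = i) := by omega
      simp only [this]
    rw [Finset.sum_congr rfl h2, Finset.sum_ite_eq]
    simp [h]
  · have h2 : ∀ i ∈ s, (if m = i + k then b i else 0) = 0 := by
      intro i _
      rw [if_neg (by omega)]
    rw [Finset.sum_congr rfl h2, Finset.sum_const_zero, if_neg (fun hc => h hc.1)]

lemma sum_pred (n m : ℕ) (b : ℕ → ℤ) :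
    (∑ i ∈ Finset.Icc 1 (n-1), if m = i - 1 then b i else 0)
      = if m + 1 ∈ Finset.Icc 1 (n-1) then b (m + 1) else 0 := by
  have h2 : ∀ i ∈ Finset.Icc 1 (n-1),
      (if m = i - 1 then b i else 0) = (if m + 1 = i then b i else 0) := by
    intro i hi
    rw [Finset.mem_Icc] at hi
    have : (m = i - 1) ↔ (m + 1 = i) := by omega
    simp only [this]
  rw [Finset.sum_congr rfl h2, Finset.sum_ite_eq]

lemma key_pt (n : ℕ) (hn : 3 ≤ n) (hno : Odd n) (x : Fin n) :
    ∑ i ∈ Finset.Icc 1 (n-1), (((i+1)/2 : ℕ) : ℤ) * sig n i x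
      = (((n + 1) / 2 : ℕ) : ℤ) * w n (n-1) x := by
  have hstep : ∀ i ∈ Finset.Icc 1 (n-1),
      (((i+1)/2 : ℕ) : ℤ) * sig n i x
        = (((if (x:ℕ)+1 = i + 0 then (((i+1)/2:ℕ):ℤ) else 0)
          + (if (x:ℕ)+1 = i + 1 then (((i+1)/2:ℕ):ℤ) else 0))
          - (if (x:ℕ)+1 = i - 1 then (((i+1)/2:ℕ):ℤ) else 0))
          - (if (x:ℕ)+1 = i + 2 then (((i+1)/2:ℕ):ℤ) else 0) := by
    intro i hi
    rw [Finset.mem_Icc] at hi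
    simp only [sig, sroot, w, Pi.add_apply, Pi.sub_apply, Pi.smul_apply, smul_eq_mul,
      Nat.add_sub_cancel, add_zero]
    split_ifs <;> first | ring | (exfalso; omega)
  rw [Finset.sum_congr rfl hstep, Finset.sum_sub_distrib, Finset.sum_sub_distrib,
    Finset.sum_add_distrib, sum_shift, sum_shift, sum_pred, sum_shift]
  have hx := x.isLt
  obtain ⟨k, hk⟩ := hno
  simp only [Finset.mem_Icc, w]
  split_ifs <;> push_cast <;> omega

lemma key_vec (n : ℕ) (hn : 3 ≤ n) (hno : Odd n) :
    (((n + 1) / 2 : ℕ) : ℤ) • w n (n - 1)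
      = ∑ i ∈ Finset.Icc 1 (n-1), (((i+1)/2 : ℕ) : ℤ) • sig n i := by
  funext x
  rw [Finset.sum_apply]
  simp only [Pi.smul_apply, smul_eq_mul]
  exact (key_pt n hn hno x).symm

/-- For `n ≥ 3` odd and `d = (n+1)/2`:
`ℤS⁺ = ⟨σ_2, σ_3, …, σ_{n−1}, d·ω_{n−1}⟩_ℤ`. -/
theorem stmt10 (n : ℕ) (hn : 3 ≤ n) (hno : Odd n) :
    ZSplus n = Submodule.span ℤ
      (sig n '' Set.Icc 2 (n - 1) ∪ {(((n + 1) / 2 : ℕ) : ℤ) • w n (n - 1)}) := by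
  have hIcc : Finset.Icc 1 (n-1) = insert 1 (Finset.Icc 2 (n-1)) := by
    ext j; simp only [Finset.mem_Icc, Finset.mem_insert]; omega
  have hmem : ∀ i ∈ Finset.Icc 2 (n-1), sig n i ∈ Submodule.span ℤ
      (sig n '' Set.Icc 2 (n - 1) ∪ {(((n + 1) / 2 : ℕ) : ℤ) • w n (n - 1)}) := by
    intro i hi
    rw [Finset.mem_Icc] at hi
    exact Submodule.subset_span (Set.mem_union_left _ ⟨i, Set.mem_Icc.mpr hi, rfl⟩)
  have hsum : (((n + 1) / 2 : ℕ) : ℤ) • w n (n - 1)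
      = sig n 1 + ∑ i ∈ Finset.Icc 2 (n-1), (((i+1)/2 : ℕ) : ℤ) • sig n i := by
    rw [key_vec n hn hno, hIcc, Finset.sum_insert (by simp)]
    norm_num
  apply le_antisymm
  · rw [ZSplus, Submodule.span_le]
    rintro v ⟨i, hi, rfl⟩
    rw [Set.mem_Icc] at hi
    rcases eq_or_lt_of_le hi.1 with h1 | h1
    · -- i = 1
      have : sig n 1 = (((n + 1) / 2 : ℕ) : ℤ) • w n (n - 1)
          - ∑ i ∈ Finset.Icc 2 (n-1), (((i+1)/2 : ℕ) : ℤ) • sig n i := by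
        rw [hsum]; ring
      rw [← h1, this]
      exact Submodule.sub_mem _
        (Submodule.subset_span (Set.mem_union_right _ rfl))
        (Submodule.sum_mem _ (fun i hi => Submodule.smul_mem _ _ (hmem i hi)))
    · exact SetLike.mem_coe.mpr <| Submodule.subset_span (Set.mem_union_left _ ⟨i, Set.mem_Icc.mpr ⟨h1, hi.2⟩, rfl⟩)
  · rw [Submodule.span_le]
    rintro v (⟨i, hi, rfl⟩ | hv)
    · rw [Set.mem_Icc] at hi
      exact Submodule.subset_span ⟨i, Set.mem_Icc.mpr ⟨by omega, hi.2⟩, rfl⟩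
    · rw [Set.mem_singleton_iff] at hv
      subst hv
      rw [key_vec n hn hno]
      exact Submodule.sum_mem _ (fun i hi => Submodule.smul_mem _ _
        (Submodule.subset_span ⟨i, Set.mem_Icc.mpr (Finset.mem_Icc.mp hi), rfl⟩))
end

section
/- Let n ≥ 3 be odd and set d = (n+1)/2. Then the quotient group Λ/ℤS^+ is isomorphic to ℤ × (ℤ/dℤ), where Λ is the weight lattice of SL(n+1) and ℤS^+ is the subgroup generated by σ_1, …, σ_{n−1}. -/
/-! Modulo `ℤS⁺` the relation `σ_k = 0` reads `ω_{k+2} = ω_k + ω_{k+1} - ω_{k-1}`, so starting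
from `ω_0 = 0` every `ω_j` is congruent to `(j mod 2) ω_1 + ⌊j/2⌋ ω_2`. The quotient is thus
generated by `ω_1, ω_2`, and the boundary condition `ω_{n+1} = 0` (with `n + 1` even) adds the
single relation `d ω_2 = 0`. Conversely, `x ↦ (∑_{j odd} x_j, ∑_j ⌊j/2⌋ x_j mod d)` kills every
`σ_k` and is onto `ℤ × ℤ/d`, with kernel exactly `ℤS⁺`. -/

open Submodule

section

variable (n : ℕ)

lemma w_eq_zero_of_eq_zero_or_lt {j : ℕ} (h : j = 0 ∨ n < j) : w n j = 0 := by
  funext i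
  simp only [w, Pi.zero_apply, ite_eq_right_iff]
  omega

lemma w_succ (i : Fin n) : w n ((i : ℕ) + 1) = Pi.basisFun ℤ (Fin n) i := by
  funext k
  simp [w, Pi.single_apply, Fin.val_inj]

lemma sig_succ (k : ℕ) :
    sig n (k + 1) = w n (k + 1) + w n (k + 2) - w n k - w n (k + 3) := by
  simp only [sig, sroot, Nat.add_sub_cancel]
  abel

lemma sig_mem_ZSplus {i : ℕ} (h1 : 1 ≤ i) (h2 : i ≤ n - 1) : sig n i ∈ ZSplus n :=
  subset_span ⟨i, Set.mem_Icc.mpr ⟨h1, h2⟩, rfl⟩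

/-- The coefficients of `ω_j ≡ (j mod 2) ω_1 + ⌊j/2⌋ ω_2` modulo `ℤS⁺`. -/
def omegaCoord (j : ℕ) : ℤ × ℤ := (((j % 2 : ℕ) : ℤ), ((j / 2 : ℕ) : ℤ))

lemma omegaCoord_add_three (k : ℕ) :
    omegaCoord (k + 3) = omegaCoord (k + 1) + omegaCoord (k + 2) - omegaCoord k := by
  simp only [omegaCoord, Prod.mk_add_mk, Prod.mk_sub_mk, Prod.mk.injEq]
  omega

def combOmegaOneTwo : ℤ × ℤ →ₗ[ℤ] (Fin n → ℤ) :=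
  (LinearMap.toSpanSingleton ℤ _ (w n 1)).coprod (LinearMap.toSpanSingleton ℤ _ (w n 2))

lemma mk_combOmegaOneTwo_omegaCoord {j : ℕ} (hj : j ≤ n + 1) :
    (ZSplus n).mkQ (combOmegaOneTwo n (omegaCoord j)) = (ZSplus n).mkQ (w n j) := by
  induction j using Nat.strong_induction_on with
  | _ j ih =>
    match j with
    | 0 => simp [omegaCoord, w_eq_zero_of_eq_zero_or_lt n (Or.inl rfl), Prod.mk_zero_zero]
    | 1 => simp [omegaCoord, combOmegaOneTwo]
    | 2 => simp [omegaCoord, combOmegaOneTwo]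
    | k + 3 =>
      have hsig : (ZSplus n).mkQ (sig n (k + 1)) = 0 :=
        (Quotient.mk_eq_zero _).mpr (sig_mem_ZSplus n (by omega) (by omega))
      rw [sig_succ, map_sub, map_sub, map_add, sub_eq_zero] at hsig
      rw [omegaCoord_add_three, map_sub, map_add, map_sub, map_add,
        ih k (by omega) (by omega), ih (k + 1) (by omega) (by omega),
        ih (k + 2) (by omega) (by omega), hsig]

/-- The linear map `x ↦ (∑_{j odd} x_j, ∑_j ⌊j/2⌋ x_j)`, sending `ω_j` to `omegaCoord j`
for `j ≤ n` (the index `i : Fin n` stands for `ω_{i+1}`). -/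
noncomputable def coords : (Fin n → ℤ) →ₗ[ℤ] ℤ × ℤ :=
  (Pi.basisFun ℤ (Fin n)).constr ℤ fun i => omegaCoord ((i : ℕ) + 1)

lemma coords_w {j : ℕ} (hj : j ≤ n) : coords n (w n j) = omegaCoord j := by
  obtain rfl | ⟨i, rfl⟩ : j = 0 ∨ ∃ i : Fin n, j = (i : ℕ) + 1 :=
    j.eq_zero_or_eq_succ_pred.imp id fun h => ⟨⟨j - 1, by omega⟩, h⟩
  · simp [w_eq_zero_of_eq_zero_or_lt n (Or.inl rfl), omegaCoord, Prod.mk_zero_zero]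
  · rw [w_succ, coords, Module.Basis.constr_basis]

lemma mk_combOmegaOneTwo_coords :
    (ZSplus n).mkQ ∘ₗ combOmegaOneTwo n ∘ₗ coords n = (ZSplus n).mkQ := by
  refine (Pi.basisFun ℤ (Fin n)).ext fun i => ?_
  rw [← w_succ]
  simp only [LinearMap.comp_apply, coords_w n (j := (i : ℕ) + 1) (by omega)]
  exact mk_combOmegaOneTwo_omegaCoord n (by omega)

def reduceSnd (d : ℕ) : ℤ × ℤ →ₗ[ℤ] ℤ × ZMod d :=
  LinearMap.id.prodMap (Int.castAddHom (ZMod d)).toIntLinearMap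

noncomputable def coordsMod : (Fin n → ℤ) →ₗ[ℤ] ℤ × ZMod ((n + 1) / 2) :=
  reduceSnd _ ∘ₗ coords n

lemma coordsMod_apply (x : Fin n → ℤ) :
    coordsMod n x = ((coords n x).1, ((coords n x).2 : ZMod ((n + 1) / 2))) := rfl

variable {n}

lemma coordsMod_w (hno : Odd n) {j : ℕ} (hj : j ≤ n + 1) :
    coordsMod n (w n j) = reduceSnd _ (omegaCoord j) := by
  obtain hlt | rfl := hj.lt_or_eq
  · rw [coordsMod, LinearMap.comp_apply, coords_w n (by omega)]
  -- `ω_{n+1} = 0`, and its coordinates `(0, d)` vanish too since `n + 1` is even.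
  obtain ⟨m, rfl⟩ := hno
  have hmod : (2 * m + 1 + 1) % 2 = 0 := by omega
  have hd : (2 * m + 1 + 1) / 2 = m + 1 := by omega
  rw [w_eq_zero_of_eq_zero_or_lt _ (Or.inr (Nat.lt_succ_self _)), map_zero, omegaCoord, hmod, hd]
  ext <;> simp [reduceSnd]

lemma ZSplus_le_ker_coordsMod (hno : Odd n) : ZSplus n ≤ LinearMap.ker (coordsMod n) := by
  rw [ZSplus, span_le]
  rintro _ ⟨i, ⟨hi1, hi2⟩, rfl⟩
  obtain ⟨k, rfl⟩ : ∃ k, i = k + 1 := ⟨i - 1, by omega⟩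
  rw [SetLike.mem_coe, LinearMap.mem_ker, sig_succ, map_sub, map_sub, map_add,
    coordsMod_w hno (j := k + 1) (by omega), coordsMod_w hno (j := k + 2) (by omega),
    coordsMod_w hno (j := k) (by omega), coordsMod_w hno (j := k + 3) (by omega),
    ← map_add, ← map_sub, ← map_sub, omegaCoord_add_three, sub_self, map_zero]

lemma mk_half_smul_w_two (hno : Odd n) :
    (ZSplus n).mkQ ((((n + 1) / 2 : ℕ) : ℤ) • w n 2) = 0 := by
  have h := mk_combOmegaOneTwo_omegaCoord n (le_refl (n + 1))
  obtain ⟨m, rfl⟩ := hno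
  have hd : (2 * m + 1 + 1) / 2 = m + 1 := by omega
  simpa [w_eq_zero_of_eq_zero_or_lt _ (Or.inr (Nat.lt_succ_self _)), omegaCoord, hd,
    Nat.add_mod, combOmegaOneTwo] using h

lemma ker_coordsMod_le_ZSplus (hno : Odd n) : LinearMap.ker (coordsMod n) ≤ ZSplus n := by
  intro x hx
  rw [LinearMap.mem_ker, coordsMod_apply, Prod.mk_eq_zero,
    ZMod.intCast_zmod_eq_zero_iff_dvd] at hx
  obtain ⟨ha, m, hm⟩ := hx
  rw [← Quotient.mk_eq_zero, ← mkQ_apply, ← mk_combOmegaOneTwo_coords]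
  have hc : coords n x = m • (0, (((n + 1) / 2 : ℕ) : ℤ)) := by
    ext <;> simp [ha, hm, mul_comm]
  simp only [LinearMap.comp_apply, hc, map_smul, combOmegaOneTwo, LinearMap.coprod_apply,
    map_zero, zero_add, LinearMap.toSpanSingleton_apply, mk_half_smul_w_two hno, smul_zero]

lemma coordsMod_surjective (hn : 2 ≤ n) : Function.Surjective (coordsMod n) := by
  rintro ⟨a, b⟩
  obtain ⟨t, rfl⟩ := ZMod.intCast_surjective b
  refine ⟨a • w n 1 + t • w n 2, ?_⟩
  rw [map_add, map_smul, map_smul, coordsMod_apply, coordsMod_apply,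
    coords_w n (by omega), coords_w n hn]
  ext <;> simp [omegaCoord]

end

/-- For `n ≥ 3` odd and `d = (n+1)/2`, the quotient `Λ/ℤS⁺` is isomorphic to
`ℤ × (ℤ/dℤ)`. -/
theorem stmt11 (n : ℕ) (hn : 3 ≤ n) (hno : Odd n) :
    Nonempty (((Fin n → ℤ) ⧸ ZSplus n) ≃+ ℤ × ZMod ((n + 1) / 2)) := by
  have hker : LinearMap.ker (coordsMod n) = ZSplus n :=
    le_antisymm (ker_coordsMod_le_ZSplus hno) (ZSplus_le_ker_coordsMod hno)
  exact ⟨((quotEquivOfEq _ _ hker.symm).trans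
    ((coordsMod n).quotKerEquivOfSurjective (coordsMod_surjective (by omega)))).toAddEquiv⟩
end

section
/- Let n ≥ 3 be odd, set d = (n+1)/2, and let e, r, m ∈ ℕ with e | d, 0 ≤ r ≤ e−1 and m ≥ 1. Let X = ⟨σ_2, σ_3, …, σ_{n−1}, e·ω_{n−1}, r·ω_{n−1} + m·ω_n⟩_ℤ ⊆ Λ. Then the family {α_1^∨|_X, α_3^∨|_X, …, α_n^∨|_X} (restrictions of the coroots with odd index to X) is part of a ℤ-basis of the dual lattice X^* = Hom_ℤ(X, ℤ) if and only if m = 1. -/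
/-- A family of elements of a `ℤ`-module is *part of a basis* if it can be extended
to (i.e. realized injectively inside) a `ℤ`-basis. -/
def IsPartOfBasis {M : Type} [AddCommGroup M] [Module ℤ M] {ι : Type} (v : ι → M) : Prop :=
  ∃ (κ : Type) (b : Module.Basis κ ℤ M) (f : ι → κ), Function.Injective f ∧ ∀ i, b (f i) = v i

/-- The family of restrictions to `X` of the coroots with odd index
`α_1^∨, α_3^∨, …`, where `α_i^∨` is the `i`-th coordinate functional on `Λ = ℤⁿ`
(i.e. `⟨α_i^∨, ω_j⟩ = δ_{ij}`), viewed as elements of `X^* = Hom_ℤ(X, ℤ)`.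
The odd indices `1, 3, …` in `{1, …, n}` are enumerated by `j ↦ 2j+1`. -/
def oddCoroots (n : ℕ) (X : Submodule ℤ (Fin n → ℤ)) :
    Fin ((n + 1) / 2) → (X →ₗ[ℤ] ℤ) := fun j =>
  (LinearMap.proj (R := ℤ) (φ := fun _ : Fin n => ℤ)
    ⟨2 * (j : ℕ), by have := j.isLt; omega⟩).domRestrict X

/-!
Restricting the odd coroots to `X` is the composite of `X ↪ Λ` with the projection `P : Λ → ℤ^d`
onto the odd coordinates. Over `ℤ`, a finite family in the dual of a finite free module is part
of a basis iff the map it induces to `ℤ^d` is surjective, since a surjection onto a free module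
splits. Now `P` sends `σ_i` to a difference of adjacent unit vectors, `ω_{n-1}` to `0` and `ω_n` to
the last unit vector, so `P X = {y | m ∣ ∑ y}`: the sum of coordinates kills all generators but the
last, where it is `m`, and for `m = 1` the unit vectors are recovered from the last one by
telescoping. This is all of `ℤ^d` exactly when `m = 1`.
-/

open Module

theorem isPartOfBasis_iff_surjective_pi {M : Type} [AddCommGroup M] [Module.Finite ℤ M]
    [Module.Free ℤ M] {ι : Type} [Finite ι] (v : ι → Dual ℤ M) :
    IsPartOfBasis v ↔ Function.Surjective (LinearMap.pi v) := by
  classical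
  constructor
  · rintro ⟨κ, b, f, hf, hbf⟩ y
    refine ⟨(evalEquiv ℤ M).symm (b.constr ℤ (Function.extend f y 0)), funext fun i => ?_⟩
    change evalEquiv ℤ M _ (v i) = y i
    rw [LinearEquiv.apply_symm_apply, ← hbf, b.constr_basis, hf.extend_apply]
  · intro hsurj
    obtain ⟨s, hs⟩ := (LinearMap.pi v).exists_rightInverse_of_surjective
      (LinearMap.range_eq_top.mpr hsurj)
    obtain ⟨e, he⟩ := ((LinearMap.pi v).exact_subtype_ker_map.splitSurjectiveEquiv
      (Submodule.injective_subtype _) ⟨s, hs⟩)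
    obtain ⟨k, bK⟩ :=
      Submodule.basisOfPid (Free.chooseBasis ℤ M) (LinearMap.ker (LinearMap.pi v))
    let bM : Basis (Fin k ⊕ ι) ℤ M := (bK.prod (Pi.basisFun ℤ ι)).map e.symm
    refine ⟨Fin k ⊕ ι, bM.dualBasis, Sum.inr, Sum.inr_injective,
      fun i => LinearMap.ext fun x => ?_⟩
    simpa [bM] using (congr_fun (LinearMap.congr_fun he.2 x) i).symm

theorem Submodule.eq_top_of_single_last_mem_of_single_succ_sub_single_mem {R : Type*} [Ring R]
    {d : ℕ} {p : Submodule R (Fin d → R)}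
    (hlast : ∀ i : Fin d, (i : ℕ) + 1 = d → Pi.single i 1 ∈ p)
    (hstep : ∀ i j : Fin d, (j : ℕ) = i + 1 → Pi.single j 1 - Pi.single i 1 ∈ p) : p = ⊤ := by
  have hsingle : ∀ c, ∀ i : Fin d, (i : ℕ) + c + 1 = d → Pi.single i (1 : R) ∈ p := by
    intro c
    induction c with
    | zero => exact hlast
    | succ c ih =>
      intro i hi
      let j : Fin d := ⟨i + 1, by omega⟩
      simpa using sub_mem (ih j (by simp [j]; omega)) (hstep i j rfl)
  rw [eq_top_iff, ← (Pi.basisFun R (Fin d)).span_eq, Submodule.span_le]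
  rintro _ ⟨i, rfl⟩
  simpa using hsingle (d - 1 - i) i (by omega)

-- `x ↦ (⟨α_{2j+1}^∨, x⟩)_j`; as `Fin n` is 0-based, this reads off the coordinates `2j`.
def oddProj (n : ℕ) : (Fin n → ℤ) →ₗ[ℤ] (Fin ((n + 1) / 2) → ℤ) :=
  LinearMap.funLeft ℤ ℤ fun j => ⟨2 * (j : ℕ), by omega⟩

theorem pi_oddCoroots (n : ℕ) (X : Submodule ℤ (Fin n → ℤ)) :
    LinearMap.pi (oddCoroots n X) = oddProj n ∘ₗ X.subtype := rfl

theorem oddProj_w_apply (n a : ℕ) (j : Fin ((n + 1) / 2)) :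
    oddProj n (w n a) j = if 2 * (j : ℕ) + 1 = a then 1 else 0 := rfl

theorem oddProj_w_two_mul_add_one (n : ℕ) (i : Fin ((n + 1) / 2)) :
    oddProj n (w n (2 * i + 1)) = Pi.single i 1 := by
  ext j
  simp [oddProj_w_apply, Pi.single_apply, Fin.ext_iff]

theorem oddProj_w_of_even (n : ℕ) {a : ℕ} (ha : Even a) : oddProj n (w n a) = 0 := by
  ext j
  rw [oddProj_w_apply, if_neg (by grind)]
  rfl

theorem sig_eq_w (n i : ℕ) : sig n i = w n i + w n (i + 1) - w n (i - 1) - w n (i + 2) := by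
  simp only [sig, sroot, Nat.add_sub_cancel]
  abel

def oddSum (n : ℕ) : (Fin n → ℤ) →ₗ[ℤ] ℤ :=
  ∑ j, LinearMap.proj j ∘ₗ oddProj n

theorem oddSum_apply (n : ℕ) (x : Fin n → ℤ) : oddSum n x = ∑ j, oddProj n x j := by
  simp [oddSum]

theorem oddSum_w (n a : ℕ) : oddSum n (w n a) = if Odd a ∧ a ≤ n then 1 else 0 := by
  rw [oddSum_apply]
  by_cases h : Odd a ∧ a ≤ n
  · obtain ⟨⟨k, rfl⟩, hk⟩ := h
    rw [if_pos ⟨odd_two_mul_add_one k, hk⟩,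
      show w n (2 * k + 1) = w n (2 * (⟨k, by omega⟩ : Fin ((n + 1) / 2)) + 1) from rfl,
      oddProj_w_two_mul_add_one]
    simp
  · rw [if_neg h]
    refine Finset.sum_eq_zero fun j _ => ?_
    rw [oddProj_w_apply, if_neg]
    grind

theorem oddSum_sig {n : ℕ} (hn : Odd n) {i : ℕ} (hi : i ∈ Set.Icc 2 (n - 1)) :
    oddSum n (sig n i) = 0 := by
  obtain ⟨hi2, hin⟩ := hi
  rw [Nat.odd_iff] at hn
  simp only [sig_eq_w, map_sub, map_add, oddSum_w, Nat.odd_iff]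
  split_ifs <;> omega

theorem oddProj_sig_two_mul (n : ℕ) {i j : Fin ((n + 1) / 2)} (hij : (j : ℕ) = i + 1) :
    oddProj n (sig n (2 * j)) = Pi.single j 1 - Pi.single i 1 := by
  rw [sig_eq_w, show 2 * (j : ℕ) - 1 = 2 * i + 1 by omega, map_sub, map_sub, map_add,
    oddProj_w_two_mul_add_one n j, oddProj_w_two_mul_add_one n i,
    oddProj_w_of_even n (even_two_mul _), oddProj_w_of_even n ⟨j + 1, by omega⟩]
  abel

theorem oddProj_w_self {n : ℕ} (hn : Odd n) {i : Fin ((n + 1) / 2)}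
    (hi : (i : ℕ) + 1 = (n + 1) / 2) :
    oddProj n (w n n) = Pi.single i 1 := by
  ext j
  simp only [oddProj_w_apply, Pi.single_apply, Fin.ext_iff]
  grind

def latticeX (n e r m : ℕ) : Submodule ℤ (Fin n → ℤ) :=
  Submodule.span ℤ (sig n '' Set.Icc 2 (n - 1) ∪
    {(e : ℤ) • w n (n - 1), (r : ℤ) • w n (n - 1) + (m : ℤ) • w n n})

theorem latticeX_le_comap_oddSum {n : ℕ} (hn : Odd n) (e r m : ℕ) :
    latticeX n e r m ≤ Submodule.comap (oddSum n) (Ideal.span {(m : ℤ)}) := by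
  have hlast : ¬ Odd (n - 1) := by grind
  rw [latticeX, Submodule.span_le]
  rintro _ (⟨i, hi, rfl⟩ | rfl | rfl) <;>
    simp only [SetLike.mem_coe, Submodule.mem_comap, Ideal.mem_span_singleton, map_add, map_smul]
  · simp [oddSum_sig hn hi]
  · simp [oddSum_w, hlast]
  · simp [oddSum_w, hlast, hn]

theorem eq_one_of_map_oddProj_latticeX_eq_top {n : ℕ} (hn : Odd n) {e r m : ℕ}
    (htop : (latticeX n e r m).map (oddProj n) = ⊤) : m = 1 := by
  obtain ⟨x, hx, hPx⟩ : Pi.single ⟨0, by grind⟩ 1 ∈ (latticeX n e r m).map (oddProj n) :=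
    htop ▸ Submodule.mem_top
  have hsum : oddSum n x = 1 := by simp [oddSum_apply, hPx]
  have hdvd := latticeX_le_comap_oddSum hn e r m hx
  rw [Submodule.mem_comap, hsum, Ideal.mem_span_singleton] at hdvd
  exact Nat.dvd_one.mp (Int.natCast_dvd_natCast.mp hdvd)

theorem map_oddProj_latticeX_eq_top {n : ℕ} (hn : Odd n) (e r : ℕ) :
    (latticeX n e r 1).map (oddProj n) = ⊤ := by
  have hmem := fun x (hx : x ∈ (latticeX n e r 1 : Set (Fin n → ℤ))) =>
    Submodule.mem_map_of_mem (f := oddProj n) hx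
  refine Submodule.eq_top_of_single_last_mem_of_single_succ_sub_single_mem (fun i hi => ?_)
    fun i j hij => ?_
  · have := hmem _ (Submodule.subset_span (Or.inr (Or.inr rfl)))
    rwa [map_add, map_smul, map_smul, oddProj_w_of_even n (by grind), oddProj_w_self hn hi,
      smul_zero, zero_add, Nat.cast_one, one_smul] at this
  · rw [← oddProj_sig_two_mul n hij]
    exact hmem _ (Submodule.subset_span (Or.inl ⟨_, ⟨by omega, by omega⟩, rfl⟩))

theorem stmt14_general (n : ℕ) (hno : Odd n) (e r m : ℕ)
    (X : Submodule ℤ (Fin n → ℤ))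
    (hX : X = Submodule.span ℤ (sig n '' Set.Icc 2 (n - 1) ∪
      {(e : ℤ) • w n (n - 1), (r : ℤ) • w n (n - 1) + (m : ℤ) • w n n})) :
    IsPartOfBasis (oddCoroots n X) ↔ m = 1 := by
  change X = latticeX n e r m at hX
  subst hX
  rw [isPartOfBasis_iff_surjective_pi, pi_oddCoroots, ← LinearMap.range_eq_top,
    LinearMap.range_comp, Submodule.range_subtype]
  exact ⟨eq_one_of_map_oddProj_latticeX_eq_top hno,
    fun hm => hm ▸ map_oddProj_latticeX_eq_top hno e r⟩

/-- For `n ≥ 3` odd, `d = (n+1)/2`, and `e, r, m ∈ ℕ` with `e ∣ d`, `r ≤ e−1`,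
`m ≥ 1`, let `X = ⟨σ_2, …, σ_{n−1}, e·ω_{n−1}, r·ω_{n−1} + m·ω_n⟩_ℤ ⊆ Λ`.
Then `{α_1^∨|_X, α_3^∨|_X, …, α_n^∨|_X}` is part of a `ℤ`-basis of
`X^* = Hom_ℤ(X, ℤ)` if and only if `m = 1`. -/
theorem stmt14 (n : ℕ) (hn : 3 ≤ n) (hno : Odd n) (e r m : ℕ)
    (he : e ∣ (n + 1) / 2) (hr : r ≤ e - 1) (hm : 1 ≤ m)
    (X : Submodule ℤ (Fin n → ℤ))
    (hX : X = Submodule.span ℤ (sig n '' Set.Icc 2 (n - 1) ∪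
      {(e : ℤ) • w n (n - 1), (r : ℤ) • w n (n - 1) + (m : ℤ) • w n n})) :
    IsPartOfBasis (oddCoroots n X) ↔ m = 1 :=
  stmt14_general n hno e r m X hX
end

section
/- Let V be a finite-dimensional real inner product space, let f : V → ℝ be a linear functional, and let v_1, …, v_m ∈ V be vectors with f(v_i) > 0 for every i. If the family (v_1, …, v_m) is linearly dependent over ℝ, then there exist indices i ≠ j such that ⟨v_i, v_j⟩ > 0 (i.e. two of the vectors form an acute angle). -/
/-!
Split a linear dependence `∑ gᵢ vᵢ = 0` into its positive and negative parts: `w := ∑ gᵢ⁺ vᵢ`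
equals `∑ gᵢ⁻ vᵢ`. If no two vectors form an acute angle, expanding `⟪w, w⟫` through these two
expressions gives only terms `gᵢ⁺ gⱼ⁻ ⟪vᵢ, vⱼ⟫ ≤ 0` (the diagonal ones vanish), so `w = 0`.
Applying `f` to the two nonnegative combinations then forces `g⁺ = g⁻ = 0`.
-/

open Finset
open scoped InnerProductSpace

section

variable {ι V : Type*} [Fintype ι]

lemma eq_zero_of_sum_smul_eq_zero_of_map_pos {K : Type*} [Ring K] [LinearOrder K]
    [IsStrictOrderedRing K] [AddCommGroup V] [Module K V] (f : V →ₗ[K] K) {v : ι → V}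
    (hf : ∀ i, 0 < f (v i)) {c : ι → K} (hc : 0 ≤ c) (hsum : ∑ i, c i • v i = 0) : c = 0 := by
  have hfsum : ∑ i, c i * f (v i) = 0 := by
    simpa only [map_sum, map_smul, smul_eq_mul, map_zero] using congrArg f hsum
  funext i
  have hterm := (sum_eq_zero_iff_of_nonneg fun j _ => mul_nonneg (hc j) (hf j).le).mp hfsum i
    (mem_univ i)
  exact (mul_eq_zero.mp hterm).resolve_right (hf i).ne'

variable [NormedAddCommGroup V] [InnerProductSpace ℝ V]

lemma inner_sum_smul_sum_smul_nonpos {v : ι → V}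
    (hv : Pairwise fun i j => ⟪v i, v j⟫_ℝ ≤ 0) {a b : ι → ℝ} (ha : 0 ≤ a) (hb : 0 ≤ b)
    (hab : ∀ i, a i * b i = 0) : ⟪∑ i, a i • v i, ∑ j, b j • v j⟫_ℝ ≤ 0 := by
  rw [sum_inner]
  refine sum_nonpos fun i _ => ?_
  rw [inner_sum]
  refine sum_nonpos fun j _ => ?_
  rw [real_inner_smul_left, real_inner_smul_right, ← mul_assoc]
  rcases eq_or_ne i j with rfl | hij
  · rw [hab i, zero_mul]
  · exact mul_nonpos_of_nonneg_of_nonpos (mul_nonneg (ha i) (hb j)) (hv hij)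

lemma posPart_mul_negPart_eq_zero {R : Type*} [Ring R] [LinearOrder R] [IsOrderedRing R]
    (x : R) : x⁺ * x⁻ = 0 := by
  rcases le_total x 0 with h | h
  · simp [posPart_eq_zero.mpr h]
  · simp [negPart_eq_zero.mpr h]

theorem linearIndependent_of_pairwise_inner_nonpos (f : V →ₗ[ℝ] ℝ) {v : ι → V}
    (hf : ∀ i, 0 < f (v i)) (hv : Pairwise fun i j => ⟪v i, v j⟫_ℝ ≤ 0) :
    LinearIndependent ℝ v := by
  rw [Fintype.linearIndependent_iff]
  intro g hsum
  have hbal : ∑ i, g⁺ i • v i = ∑ i, g⁻ i • v i := by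
    rw [← sub_eq_zero, ← sum_sub_distrib]
    simpa only [← sub_smul, ← Pi.sub_apply g⁺, posPart_sub_negPart] using hsum
  have hw : ∑ i, g⁺ i • v i = 0 := by
    refine real_inner_self_nonpos.mp ?_
    conv_lhs => arg 3; rw [hbal]
    exact inner_sum_smul_sum_smul_nonpos hv (posPart_nonneg g) (negPart_nonneg g)
      fun i => posPart_mul_negPart_eq_zero (g i)
  have hpos := eq_zero_of_sum_smul_eq_zero_of_map_pos f hf (posPart_nonneg g) hw
  have hneg := eq_zero_of_sum_smul_eq_zero_of_map_pos f hf (negPart_nonneg g) (hbal ▸ hw)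
  intro i
  rw [← posPart_sub_negPart g, hpos, hneg, sub_zero, Pi.zero_apply]

end

theorem stmt19_general {V : Type} [NormedAddCommGroup V] [InnerProductSpace ℝ V]
    (f : V →ₗ[ℝ] ℝ) (m : ℕ) (v : Fin m → V)
    (hf : ∀ i, 0 < f (v i)) (hdep : ¬ LinearIndependent ℝ v) :
    ∃ i j, i ≠ j ∧ 0 < (inner ℝ (v i) (v j) : ℝ) := by
  by_contra! hacute
  exact hdep (linearIndependent_of_pairwise_inner_nonpos f hf fun i j => hacute i j)

/-- Let `V` be a finite-dimensional real inner product space, `f : V → ℝ` a linear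
functional, and `v_1, …, v_m ∈ V` vectors with `f(v_i) > 0` for all `i`. If the
family `(v_1, …, v_m)` is linearly dependent over `ℝ`, then two of the vectors form
an acute angle, i.e. `⟪v_i, v_j⟫ > 0` for some `i ≠ j`. -/
theorem stmt19 {V : Type} [NormedAddCommGroup V] [InnerProductSpace ℝ V]
    [FiniteDimensional ℝ V] (f : V →ₗ[ℝ] ℝ) (m : ℕ) (v : Fin m → V)
    (hf : ∀ i, 0 < f (v i)) (hdep : ¬ LinearIndependent ℝ v) :
    ∃ i j, i ≠ j ∧ 0 < (inner ℝ (v i) (v j) : ℝ) :=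
  stmt19_general f m v hf hdep
end
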